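/- arXiv:2010.10282 — 2 statements merged into one kernel-verified Lean document; each statement's English description precedes it below -/
import Mathlib

section
/- Let α > 2 and T > 0, and define ρ(T,α) := T^{2/α} · ∫_{T^{−2/α}}^∞ 1/(1+u^{α/2}) du. Let K ≥ 1 be an integer, and for j = 1,…,K let λ_j > 0, P_j > 0, w_j := P_j^{1/α}, q_j := λ_j·w_j² / ∑_{k=1}^K λ_k·w_k², and let p_j ∈ [0,1]. Fix an index i and a real r > 0, and set λ̄_i := λ_i/q_i. Then ∑_{j=1}^K 2π·p_j·λ_j · ∫_{r·w_j/w_i}^∞ (1 − 1/(1 + T·(r·w_j/w_i)^α·v^{−α}))·v dv = π·r²·λ̄_i·(∑_{j=1}^K p_j·q_j)·ρ(T,α). -/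
/-!
Substituting `u = (v / c) ^ 2` with `c = a T^{1/α}` turns the interference integral of tier `j`,
taken beyond its exclusion radius `a = r w_j / w_i` (a closer tier-`j` station would serve the
user), into `a² / 2 · ρ(T, α)`. Summing over the tiers, the factors `λ_j w_j²` recombine into
`λ̄_i · ∑_j p_j q_j` after dividing by `∑_k λ_k w_k²`.
-/

open Real MeasureTheory Set

noncomputable def rho (T α : ℝ) : ℝ :=
  T ^ (2 / α) * ∫ u in Ioi (T ^ (-2 / α)), 1 / (1 + u ^ (α / 2))

lemma strictMonoOn_div_sq {c : ℝ} (hc : 0 < c) : StrictMonoOn (fun v => (v / c) ^ 2) (Ici 0) :=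
  fun _ hv _ _ hvw => pow_lt_pow_left₀ (div_lt_div_of_pos_right hvw hc) (div_nonneg hv hc.le) two_ne_zero

lemma image_div_sq_Ioi {a c : ℝ} (ha : 0 ≤ a) (hc : 0 < c) :
    (fun v => (v / c) ^ 2) '' Ioi a = Ioi ((a / c) ^ 2) := by
  ext u
  constructor
  · rintro ⟨v, hv, rfl⟩
    exact strictMonoOn_div_sq hc ha (ha.trans hv.le) hv
  · intro hu
    have hu0 : 0 ≤ u := (sq_nonneg _).trans hu.le
    refine ⟨c * √u, ?_, ?_⟩
    · rw [mem_Ioi, ← div_lt_iff₀' hc]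
      exact Real.lt_sqrt_of_sq_lt hu
    · simp only [mul_div_cancel_left₀ _ hc.ne', Real.sq_sqrt hu0]

lemma setIntegral_Ioi_comp_div_sq {E : Type*} [NormedAddCommGroup E] [NormedSpace ℝ E]
    (g : ℝ → E) {a c : ℝ} (ha : 0 ≤ a) (hc : 0 < c) :
    ∫ u in Ioi ((a / c) ^ 2), g u = ∫ v in Ioi a, (2 * v / c ^ 2) • g ((v / c) ^ 2) := by
  have hIoi : Ioi a ⊆ Ici 0 := fun v hv => ha.trans (le_of_lt hv)
  have hderiv : ∀ v ∈ Ioi a, HasDerivWithinAt (fun v => (v / c) ^ 2) (2 * v / c ^ 2) (Ioi a) v := by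
    intro v _
    refine (((hasDerivAt_id' v).div_const c).pow 2).hasDerivWithinAt.congr_deriv ?_
    norm_num
    field_simp
  rw [← image_div_sq_Ioi ha hc, integral_image_eq_integral_abs_deriv_smul measurableSet_Ioi hderiv
    ((strictMonoOn_div_sq hc).mono hIoi).injOn]
  refine setIntegral_congr_fun measurableSet_Ioi fun v hv => ?_
  have hv0 : 0 ≤ v := hIoi hv
  rw [abs_of_nonneg (by positivity)]

lemma one_sub_one_div_one_add_mul_rpow_neg_mul {α T a c v : ℝ} (hc : 0 < c) (hv : 0 < v)
    (hcα : c ^ α = T * a ^ α) :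
    (1 - 1 / (1 + T * a ^ α * v ^ (-α))) * v = v / (1 + ((v / c) ^ 2) ^ (α / 2)) := by
  have hvc : 0 ≤ v / c := div_nonneg hv.le hc.le
  have hsq : ((v / c) ^ 2) ^ (α / 2) = v ^ α / (T * a ^ α) := by
    rw [← rpow_natCast, ← rpow_mul hvc, Nat.cast_ofNat, mul_div_cancel₀ α two_ne_zero,
      div_rpow hv.le hc.le, hcα]
  have hTa : 0 < T * a ^ α := hcα ▸ rpow_pos_of_pos hc α
  rw [hsq, rpow_neg hv.le]
  generalize T * a ^ α = x at hTa ⊢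
  field_simp
  ring

lemma setIntegral_Ioi_interference {α T a : ℝ} (hα : α ≠ 0) (hT : 0 < T) (ha : 0 < a) :
    ∫ v in Ioi a, (1 - 1 / (1 + T * a ^ α * v ^ (-α))) * v = a ^ 2 / 2 * rho T α := by
  set c := a * T ^ (1 / α)
  have hc : 0 < c := mul_pos ha (rpow_pos_of_pos hT _)
  have hcα : c ^ α = T * a ^ α := by
    rw [mul_rpow ha.le (rpow_pos_of_pos hT _).le, ← rpow_mul hT.le, one_div_mul_cancel hα, rpow_one,
      mul_comm]
  have hc2 : c ^ 2 = a ^ 2 * T ^ (2 / α) := by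
    rw [mul_pow, ← rpow_natCast (T ^ (1 / α)), ← rpow_mul hT.le, Nat.cast_ofNat, one_div_mul_eq_div]
  have hac : (a / c) ^ 2 = T ^ (-2 / α) := by
    rw [div_pow, hc2, div_mul_cancel_left₀ (by positivity), ← rpow_neg hT.le, neg_div]
  calc ∫ v in Ioi a, (1 - 1 / (1 + T * a ^ α * v ^ (-α))) * v
      = ∫ v in Ioi a, c ^ 2 / 2 * (2 * v / c ^ 2 * (1 / (1 + ((v / c) ^ 2) ^ (α / 2)))) := by
        refine setIntegral_congr_fun measurableSet_Ioi fun v hv => ?_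
        rw [one_sub_one_div_one_add_mul_rpow_neg_mul hc (ha.trans hv) hcα]
        field_simp
    _ = c ^ 2 / 2 * ∫ u in Ioi ((a / c) ^ 2), 1 / (1 + u ^ (α / 2)) := by
        rw [integral_const_mul, setIntegral_Ioi_comp_div_sq _ ha.le hc]
        rfl
    _ = a ^ 2 / 2 * rho T α := by
        rw [hc2, hac, rho]
        ring

theorem stmt_5_general (α T : ℝ) (hα : 2 < α) (hT : 0 < T)
    (K : ℕ)
    (lam P w q p : Fin K → ℝ)
    (hlam : ∀ j, 0 < lam j) (hP : ∀ j, 0 < P j)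
    (hw : ∀ j, w j = P j ^ (1 / α))
    (hq : ∀ j, q j = lam j * w j ^ 2 / ∑ k, lam k * w k ^ 2)
    (i : Fin K) (r : ℝ) (hr : 0 < r) :
    ∑ j, 2 * π * p j * lam j *
        ∫ v in Set.Ioi (r * w j / w i),
          (1 - 1 / (1 + T * (r * w j / w i) ^ α * v ^ (-α))) * v
      = π * r ^ 2 * (lam i / q i) * (∑ j, p j * q j) *
          (T ^ (2 / α) * ∫ u in Set.Ioi (T ^ (-2 / α)), 1 / (1 + u ^ (α / 2))) := by
  show _ = π * r ^ 2 * (lam i / q i) * (∑ j, p j * q j) * rho T α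
  have hw_pos : ∀ j, 0 < w j := fun j => hw j ▸ rpow_pos_of_pos (hP j) _
  set S := ∑ k, lam k * w k ^ 2
  have hS : 0 < S :=
    Finset.sum_pos (fun k _ => mul_pos (hlam k) (pow_pos (hw_pos k) 2)) ⟨i, Finset.mem_univ _⟩
  have hterm : ∀ j, ∫ v in Ioi (r * w j / w i), (1 - 1 / (1 + T * (r * w j / w i) ^ α * v ^ (-α))) * v
      = (r * w j / w i) ^ 2 / 2 * rho T α := fun j =>
    setIntegral_Ioi_interference (by linarith) hT (div_pos (mul_pos hr (hw_pos j)) (hw_pos i))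
  have hlam_div : lam i / q i = S / w i ^ 2 := by
    rw [hq i, div_div_eq_mul_div, mul_div_mul_left _ _ (hlam i).ne']
  have hpq : ∑ j, p j * q j = (∑ j, p j * lam j * w j ^ 2) / S := by
    rw [Finset.sum_div]
    exact Finset.sum_congr rfl fun j _ => by rw [hq j]; ring
  have hS_cancel : π * r ^ 2 * (S / w i ^ 2) * ((∑ j, p j * lam j * w j ^ 2) / S) * rho T α
      = ∑ j, π * r ^ 2 / w i ^ 2 * rho T α * (p j * lam j * w j ^ 2) := by
    rw [← Finset.mul_sum]
    field_simp
  rw [hlam_div, hpq, hS_cancel]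
  refine Finset.sum_congr rfl fun j _ => ?_
  rw [hterm]
  field_simp

theorem stmt_5 (α T : ℝ) (hα : 2 < α) (hT : 0 < T)
    (K : ℕ) (hK : 1 ≤ K)
    (lam P w q p : Fin K → ℝ)
    (hlam : ∀ j, 0 < lam j) (hP : ∀ j, 0 < P j)
    (hw : ∀ j, w j = P j ^ (1 / α))
    (hq : ∀ j, q j = lam j * w j ^ 2 / ∑ k, lam k * w k ^ 2)
    (hp0 : ∀ j, 0 ≤ p j) (hp1 : ∀ j, p j ≤ 1)
    (i : Fin K) (r : ℝ) (hr : 0 < r) :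
    ∑ j, 2 * π * p j * lam j *
        ∫ v in Set.Ioi (r * w j / w i),
          (1 - 1 / (1 + T * (r * w j / w i) ^ α * v ^ (-α))) * v
      = π * r ^ 2 * (lam i / q i) * (∑ j, p j * q j) *
          (T ^ (2 / α) * ∫ u in Set.Ioi (T ^ (-2 / α)), 1 / (1 + u ^ (α / 2))) :=
  stmt_5_general α T hα hT K lam P w q p hlam hP hw hq i r hr
end

section
/- Let K ≥ 1 be an integer, and for j = 1,…,K let λ_j > 0 and w_j > 0 be reals; set q_j := λ_j·w_j² / ∑_{k=1}^K λ_k·w_k². Fix an index i, nonnegative integers m_1,…,m_K, set n := 1 + ∑_{j=1}^K m_j, and let r ≥ 0. Then ∫_r^∞ exp(−π·λ_i·t²) · (2·(π·λ_i·t²)^{m_i+1})/(t·m_i!) · ∏_{j≠i} [ ((π·λ_j·(w_j/w_i)²·t²)^{m_j}/m_j!) · exp(−π·λ_j·(w_j/w_i)²·t²) ] dt = (n−1)! · (∏_{j=1}^K q_j^{m_j}/m_j!) · q_i · ∑_{k=0}^{n−1} exp(−π·λ_i·r²/q_i) · (π·λ_i·r²/q_i)^k / k!. -/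
/-!
With `c := π ∑ₖ λₖ wₖ² / wᵢ²` every tier rate becomes `π λⱼ (wⱼ/wᵢ)² = c qⱼ`, and since
`∑ⱼ qⱼ = 1` the product of the Poisson factors collapses: the integrand equals
`(n-1)! (∏ⱼ qⱼ^mⱼ / mⱼ!) qᵢ` times the density `2ct e^{-ct²} (ct²)^{n-1} / (n-1)!` of the distance
to the `n`-th nearest point of a planar Poisson process of intensity `c / π`. The tail of that
density is the Poisson partial sum `∑_{k<n} e^{-cr²} (cr²)^k / k!`, because the derivative of
`x ↦ ∑_{k<n} e^{-x} x^k / k!` telescopes to `-e^{-x} x^{n-1} / (n-1)!`.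
-/

open Real MeasureTheory Filter Finset Topology
open scoped Nat

lemma hasDerivAt_sum_range_exp_neg_mul_pow_div_factorial (n : ℕ) (x : ℝ) :
    HasDerivAt (fun x : ℝ => ∑ k ∈ range (n + 1), exp (-x) * x ^ k / k !)
      (-(exp (-x) * x ^ n / n !)) x := by
  have hexp : HasDerivAt (fun x : ℝ => exp (-x)) (-exp (-x)) x := by
    simpa using (hasDerivAt_neg x).exp
  induction n with
  | zero => simpa using hexp
  | succ n ih =>
    simp_rw [sum_range_succ _ (n + 1)]
    refine (ih.add ((hexp.mul (hasDerivAt_pow (n + 1) x)).div_const _)).congr_deriv ?_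
    rw [Nat.factorial_succ]
    push_cast
    field_simp
    ring

lemma tendsto_sum_range_exp_neg_mul_pow_div_factorial_atTop (n : ℕ) :
    Tendsto (fun x : ℝ => ∑ k ∈ range n, exp (-x) * x ^ k / k !) atTop (𝓝 0) := by
  simpa using tendsto_finsetSum (range n) fun k _ =>
    ((tendsto_pow_mul_exp_neg_atTop_nhds_zero k).div_const (k ! : ℝ)).congr fun x => by ring

theorem integral_Ioi_mul_exp_neg_mul_sq_mul_pow {c : ℝ} (hc : 0 < c) (n : ℕ) {r : ℝ}
    (hr : 0 ≤ r) :
    ∫ t in Set.Ioi r, 2 * c * t * exp (-(c * t ^ 2)) * (c * t ^ 2) ^ n / n !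
      = ∑ k ∈ range (n + 1), exp (-(c * r ^ 2)) * (c * r ^ 2) ^ k / k ! := by
  let tail : ℝ → ℝ := fun t =>
    -(∑ k ∈ range (n + 1), exp (-(c * t ^ 2)) * (c * t ^ 2) ^ k / k !)
  have hderiv : ∀ t, HasDerivAt tail
      (2 * c * t * exp (-(c * t ^ 2)) * (c * t ^ 2) ^ n / n !) t := fun t => by
    have hsq : HasDerivAt (fun t : ℝ => c * t ^ 2) (c * (2 * t)) t := by
      simpa using (hasDerivAt_pow 2 t).const_mul c
    refine ((hasDerivAt_sum_range_exp_neg_mul_pow_div_factorial n _).comp t hsq).neg.congr_deriv ?_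
    ring
  have hlim : Tendsto tail atTop (𝓝 0) := by
    simpa using ((tendsto_sum_range_exp_neg_mul_pow_div_factorial_atTop (n + 1)).comp
      ((tendsto_pow_atTop two_ne_zero).const_mul_atTop hc)).neg
  have hnonneg : ∀ t ∈ Set.Ioi r, 0 ≤ 2 * c * t * exp (-(c * t ^ 2)) * (c * t ^ 2) ^ n / n ! :=
    fun t ht => by have : 0 < t := hr.trans_lt ht; positivity
  rw [integral_Ioi_of_hasDerivAt_of_nonneg (hderiv r).continuousAt.continuousWithinAt
    (fun t _ => hderiv t) hnonneg hlim]
  simp [tail]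

lemma prod_pow_div_factorial_mul_exp_neg {ι : Type*} (s : Finset ι) (a : ι → ℝ) (m : ι → ℕ)
    (x : ℝ) :
    ∏ j ∈ s, ((a j * x) ^ m j / (m j)! * exp (-(a j * x)))
      = (∏ j ∈ s, a j ^ m j / (m j)!) * x ^ (∑ j ∈ s, m j) * exp (-((∑ j ∈ s, a j) * x)) := by
  simp_rw [mul_pow, mul_div_right_comm _ (x ^ _), prod_mul_distrib, prod_pow_eq_pow_sum,
    ← exp_sum, sum_mul, sum_neg_distrib]

lemma exp_neg_mul_pow_succ_div_mul_prod_erase_eq {ι : Type*} [Fintype ι] [DecidableEq ι]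
    (c : ℝ) {q : ι → ℝ} (hq : ∑ j, q j = 1) (i : ι) (m : ι → ℕ) {t : ℝ} (ht : t ≠ 0) :
    exp (-(c * q i * t ^ 2)) * (2 * (c * q i * t ^ 2) ^ (m i + 1)) / (t * (m i)!) *
        ∏ j ∈ univ.erase i, ((c * q j * t ^ 2) ^ m j / (m j)! * exp (-(c * q j * t ^ 2)))
      = (∑ j, m j)! * (∏ j, q j ^ m j / (m j)!) * q i *
          (2 * c * t * exp (-(c * t ^ 2)) * (c * t ^ 2) ^ (∑ j, m j) / (∑ j, m j)!) := by
  have hfactor : ∀ j, (c * q j * t ^ 2) ^ m j / (m j)! * exp (-(c * q j * t ^ 2))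
      = (q j * (c * t ^ 2)) ^ m j / (m j)! * exp (-(q j * (c * t ^ 2))) := fun j => by ring_nf
  have hprod := prod_pow_div_factorial_mul_exp_neg univ q m (c * t ^ 2)
  rw [hq, one_mul, ← mul_prod_erase univ _ (mem_univ i)] at hprod
  simp_rw [hfactor] at hprod ⊢
  set x := c * t ^ 2 with hx
  calc _ = 2 * c * t * q i * ((q i * x) ^ m i / (m i)! * exp (-(q i * x)) *
          ∏ j ∈ univ.erase i, ((q j * x) ^ m j / (m j)! * exp (-(q j * x)))) := by
        rw [hx]
        field_simp
        ring_nf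
    _ = _ := by
        rw [hprod]
        field_simp

theorem stmt_6_general (K : ℕ)
    (lam w q : Fin K → ℝ)
    (hlam : ∀ j, 0 < lam j) (hw : ∀ j, 0 < w j)
    (hq : ∀ j, q j = lam j * w j ^ 2 / ∑ k, lam k * w k ^ 2)
    (i : Fin K) (m : Fin K → ℕ) (n : ℕ) (hn : n = 1 + ∑ j, m j)
    (r : ℝ) (hr : 0 ≤ r) :
    ∫ t in Set.Ioi r,
        Real.exp (-(π * lam i * t ^ 2)) *
            (2 * (π * lam i * t ^ 2) ^ (m i + 1)) / (t * (Nat.factorial (m i))) *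
          ∏ j ∈ Finset.univ.erase i,
            ((π * lam j * (w j / w i) ^ 2 * t ^ 2) ^ (m j) / (Nat.factorial (m j)) *
              Real.exp (-(π * lam j * (w j / w i) ^ 2 * t ^ 2)))
      = (Nat.factorial (n - 1)) * (∏ j, q j ^ (m j) / (Nat.factorial (m j))) * q i *
          ∑ k ∈ Finset.range n,
            Real.exp (-(π * lam i * r ^ 2 / q i)) * (π * lam i * r ^ 2 / q i) ^ k /
              (Nat.factorial k) := by
  have hS : 0 < ∑ k, lam k * w k ^ 2 :=
    sum_pos (fun j _ => by have := hlam j; have := hw j; positivity) ⟨i, mem_univ i⟩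
  obtain ⟨c, hc, hcq⟩ : ∃ c > 0, ∀ j, π * lam j * (w j / w i) ^ 2 = c * q j := by
    have := hw i
    refine ⟨π * (∑ k, lam k * w k ^ 2) / w i ^ 2, by positivity, fun j => ?_⟩
    rw [hq j]
    field_simp
  have hci : π * lam i = c * q i := by simpa [(hw i).ne'] using hcq i
  have hsum : ∑ j, q j = 1 := by simp only [hq, ← sum_div, div_self hS.ne']
  have hqi : 0 < q i := by rw [hq i]; have := hlam i; have := hw i; positivity
  have hr2 : π * lam i * r ^ 2 / q i = c * r ^ 2 := by rw [hci]; field_simp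
  obtain rfl : n = (∑ j, m j) + 1 := by omega
  rw [hr2, Nat.add_sub_cancel]
  simp only [hcq, hci]
  rw [setIntegral_congr_fun measurableSet_Ioi fun t ht =>
      exp_neg_mul_pow_succ_div_mul_prod_erase_eq c hsum i m (hr.trans_lt ht).ne',
    integral_const_mul, integral_Ioi_mul_exp_neg_mul_sq_mul_pow hc _ hr]

theorem stmt_6 (K : ℕ) (hK : 1 ≤ K)
    (lam w q : Fin K → ℝ)
    (hlam : ∀ j, 0 < lam j) (hw : ∀ j, 0 < w j)
    (hq : ∀ j, q j = lam j * w j ^ 2 / ∑ k, lam k * w k ^ 2)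
    (i : Fin K) (m : Fin K → ℕ) (n : ℕ) (hn : n = 1 + ∑ j, m j)
    (r : ℝ) (hr : 0 ≤ r) :
    ∫ t in Set.Ioi r,
        Real.exp (-(π * lam i * t ^ 2)) *
            (2 * (π * lam i * t ^ 2) ^ (m i + 1)) / (t * (Nat.factorial (m i))) *
          ∏ j ∈ Finset.univ.erase i,
            ((π * lam j * (w j / w i) ^ 2 * t ^ 2) ^ (m j) / (Nat.factorial (m j)) *
              Real.exp (-(π * lam j * (w j / w i) ^ 2 * t ^ 2)))
      = (Nat.factorial (n - 1)) * (∏ j, q j ^ (m j) / (Nat.factorial (m j))) * q i *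
          ∑ k ∈ Finset.range n,
            Real.exp (-(π * lam i * r ^ 2 / q i)) * (π * lam i * r ^ 2 / q i) ^ k /
              (Nat.factorial k) :=
  stmt_6_general K lam w q hlam hw hq i m n hn r hr
end
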